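/- (Pairwise contraction underlying Theorem 2.) Under the multi-model adaptive update law, if for a pair of indices i, j the associated state estimates agree initially (x̃_i(t₀) = x̃_j(t₀), equivalently x̂_i(t₀) = x̂_j(t₀)), then for every t ≥ t₀ one has ‖ψ̂_i(t) − ψ̂_j(t)‖_F ≤ ‖ψ̂_i(t₀) − ψ̂_j(t₀)‖_F. -/

import Mathlib

open Filter Topology

attribute [local instance] Matrix.frobeniusNormedAddCommGroup Matrix.frobeniusNormedSpace

/-- Entry evaluation as a continuous linear map on matrices with the Frobenius norm. -/
noncomputable def entryCLM (n p : ℕ) (a : Fin n) (b : Fin p) :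
    Matrix (Fin n) (Fin p) ℝ →L[ℝ] ℝ :=
  ((LinearMap.proj b : (Fin p → ℝ) →ₗ[ℝ] ℝ).comp
    (LinearMap.proj a : (Fin n → Fin p → ℝ) →ₗ[ℝ] (Fin p → ℝ))).toContinuousLinearMap

@[simp] lemma entryCLM_apply (n p : ℕ) (a : Fin n) (b : Fin p) (M : Matrix (Fin n) (Fin p) ℝ) :
    entryCLM n p a b M = M a b := rfl

lemma frobenius_norm_eq_sqrt (n p : ℕ) (M : Matrix (Fin n) (Fin p) ℝ) :
    ‖M‖ = Real.sqrt (∑ a, ∑ b, (M a b)^2) := by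
  rw [Matrix.frobenius_norm_def, Real.sqrt_eq_rpow]
  congr 1
  refine Finset.sum_congr rfl fun a _ => Finset.sum_congr rfl fun b _ => ?_
  rw [Real.norm_eq_abs, show ((2:ℝ)) = ((2:ℕ):ℝ) by norm_num, Real.rpow_natCast, sq_abs]

/-- (Pairwise contraction underlying Theorem 2.) Under the multi-model
adaptive update law, if for a pair of indices `i, j` the associated state estimates agree
initially (`x̃ᵢ(t₀) = x̃ⱼ(t₀)`), then for every `t ≥ t₀` one has
`‖ψ̂ᵢ(t) − ψ̂ⱼ(t)‖_F ≤ ‖ψ̂ᵢ(t₀) − ψ̂ⱼ(t₀)‖_F`. -/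
theorem pairwise_parameter_contraction
    (n p q : ℕ) (t₀ k Γ : ℝ) (hk : 0 < k) (hΓ : 0 < Γ)
    (Θ : Matrix (Fin n) (Fin p) ℝ)
    (X : ℝ → EuclideanSpace ℝ (Fin p))
    (ψh : Fin q → ℝ → Matrix (Fin n) (Fin p) ℝ)
    (xtil : Fin q → ℝ → EuclideanSpace ℝ (Fin n))
    (hx : ∀ i, ∀ t, t₀ ≤ t →
      HasDerivAt (xtil i)
        ((show EuclideanSpace ℝ (Fin n) from WithLp.toLp 2 ((Θ - ψh i t).mulVec (X t))) - k • xtil i t) t)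
    (hψ : ∀ i, ∀ t, t₀ ≤ t →
      HasDerivAt (ψh i) (Γ • Matrix.vecMulVec (xtil i t) (X t)) t)
    (i j : Fin q) (hinit : xtil i t₀ = xtil j t₀) :
    ∀ t, t₀ ≤ t → ‖ψh i t - ψh j t‖ ≤ ‖ψh i t₀ - ψh j t₀‖ := by
  set E : ℝ → Fin n → ℝ := fun s a => xtil i s a - xtil j s a with hE
  set D : ℝ → Fin n → Fin p → ℝ := fun s a b => ψh i s a b - ψh j s a b with hD
  set V : ℝ → ℝ := fun s => (∑ a, (E s a)^2) + Γ⁻¹ * ∑ a, ∑ b, (D s a b)^2 with hV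
  have hVd : ∀ s, t₀ ≤ s → HasDerivAt V (-(2*k) * ∑ a, (E s a)^2) s := by
    intro s hs
    have hxc : ∀ (l : Fin q) (a : Fin n), HasDerivAt (fun u => xtil l u a)
        (((Θ - ψh l s).mulVec (X s)) a - k * xtil l s a) s := by
      intro l a
      have h := (EuclideanSpace.proj a).hasFDerivAt.comp_hasDerivAt s (hx l s hs)
      simp at h
      exact h
    have hψc : ∀ (l : Fin q) (a : Fin n) (b : Fin p), HasDerivAt (fun u => ψh l u a b)
        (Γ * (xtil l s a * X s b)) s := by
      intro l a b
      have h := (entryCLM n p a b).hasFDerivAt.comp_hasDerivAt s (hψ l s hs)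
      simp [Matrix.vecMulVec_apply, Matrix.smul_apply, smul_eq_mul, Function.comp_def] at h
      exact h
    have hEc : ∀ a, HasDerivAt (fun u => E u a)
        ((-∑ b, D s a b * X s b) - k * E s a) s := by
      intro a
      have h := (hxc i a).sub (hxc j a)
      refine h.congr_deriv (Eq.symm ?_)
      simp only [hE, hD, Matrix.mulVec, dotProduct, Matrix.sub_apply]
      rw [sub_sub_sub_comm, ← Finset.sum_sub_distrib]
      congr 1
      · rw [← Finset.sum_neg_distrib]
        exact Finset.sum_congr rfl fun b _ => by ring
      · ring
    have hDc : ∀ a b, HasDerivAt (fun u => D u a b) (Γ * (E s a * X s b)) s := by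
      intro a b
      have h := (hψc i a b).sub (hψc j a b)
      refine h.congr_deriv (Eq.symm ?_)
      simp only [hE]; ring
    have h1 : HasDerivAt (fun u => ∑ a, (E u a)^2)
        (∑ a, 2 * E s a * ((-∑ b, D s a b * X s b) - k * E s a)) s :=
      HasDerivAt.fun_sum fun a _ => by
        have h := (hEc a).fun_pow 2
        simp [mul_comm, mul_assoc, mul_left_comm] at h
        exact h.congr_deriv (by ring)
    have h2 : HasDerivAt (fun u => ∑ a, ∑ b, (D u a b)^2)
        (∑ a, ∑ b, 2 * D s a b * (Γ * (E s a * X s b))) s :=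
      HasDerivAt.fun_sum fun a _ => HasDerivAt.fun_sum fun b _ => by
        have h := (hDc a b).fun_pow 2
        simp [mul_comm, mul_assoc, mul_left_comm] at h
        exact h.congr_deriv (by ring)
    have h := h1.add (h2.const_mul Γ⁻¹)
    refine h.congr_deriv (Eq.symm ?_)
    rw [Finset.mul_sum, Finset.mul_sum, ← Finset.sum_add_distrib]
    refine Finset.sum_congr rfl fun a _ => ?_
    rw [mul_sub, mul_neg, Finset.mul_sum, Finset.mul_sum]
    have hz : ∀ b : Fin p, Γ⁻¹ * (2 * D s a b * (Γ * (E s a * X s b)))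
        = 2 * E s a * (D s a b * X s b) := by
      intro b; field_simp
    rw [Finset.sum_congr rfl fun b _ => hz b]
    ring
  have hVc : ContinuousOn V (Set.Ici t₀) :=
    fun s hs => (hVd s hs).continuousAt.continuousWithinAt
  have hanti : AntitoneOn V (Set.Ici t₀) := by
    apply antitoneOn_of_deriv_nonpos (convex_Ici t₀) hVc
    · intro s hs
      rw [interior_Ici] at hs
      exact (hVd s hs.le).differentiableAt.differentiableWithinAt
    · intro s hs
      rw [interior_Ici] at hs
      rw [(hVd s hs.le).deriv]
      have h0 : (0:ℝ) ≤ ∑ a, (E s a)^2 := Finset.sum_nonneg fun a _ => sq_nonneg _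
      nlinarith
  intro t ht
  have hE0 : ∀ a, E t₀ a = 0 := by intro a; simp [hE, hinit]
  have h1 : Γ⁻¹ * ∑ a, ∑ b, (D t a b)^2 ≤ V t := by
    have h0 : (0:ℝ) ≤ ∑ a, (E t a)^2 := Finset.sum_nonneg fun a _ => sq_nonneg _
    simp only [hV]; linarith
  have h2 : V t₀ = Γ⁻¹ * ∑ a, ∑ b, (D t₀ a b)^2 := by
    simp [hV, hE0]
  have h3 : V t ≤ V t₀ := hanti Set.self_mem_Ici ht ht
  have key : ∑ a, ∑ b, (D t a b)^2 ≤ ∑ a, ∑ b, (D t₀ a b)^2 := by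
    have h4 : Γ⁻¹ * ∑ a, ∑ b, (D t a b)^2 ≤ Γ⁻¹ * ∑ a, ∑ b, (D t₀ a b)^2 :=
      h1.trans (h3.trans_eq h2)
    exact le_of_mul_le_mul_left h4 (inv_pos.mpr hΓ)
  rw [frobenius_norm_eq_sqrt, frobenius_norm_eq_sqrt]
  apply Real.sqrt_le_sqrt
  simpa [Matrix.sub_apply, hD] using key
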